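/- arXiv:1309.6646 — 3 statements merged into one kernel-verified Lean document; each statement's English description precedes it below -/
import Mathlib

section
/- Let m ≥ 0 be an integer, a, b > 0, and 0 < s₁ < s₂. Define G(s) := (as₁+bs)^{m+2}/(a+b)^{m+1} − a·s₁^{m+2} − (as₂+bs)^{m+2}/(a+b)^{m+1} + a·s₂^{m+2} for s ∈ [s₁, s₂]. Then G(s₁) > 0, G(s₂) < 0, and G is strictly decreasing on [s₁, s₂]; consequently there exists a unique s̃ ∈ (s₁, s₂) with G(s̃) = 0. -/
/-!
At `s = s₁` and `s = s₂` the sign of `G` is the strict convexity of `t ↦ t ^ (m + 2)` at the points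
`s₁, s₂` with weights `a, b`. Up to constants, `G s` is minus the difference
`(a s₂ + b s) ^ (m + 2) - (a s₁ + b s) ^ (m + 2)`, whose derivative is positive because
`t ↦ t ^ (m + 1)` is strictly increasing on `t ≥ 0`; the zero then comes from the intermediate
value theorem.
-/

open Set

theorem StrictAntiOn.existsUnique_mem_Ioo_eq {α δ : Type*} [ConditionallyCompleteLinearOrder α]
    [TopologicalSpace α] [OrderTopology α] [DenselyOrdered α] [LinearOrder δ] [TopologicalSpace δ]
    [OrderClosedTopology δ] {f : α → δ} {a b : α} {y : δ} (hab : a ≤ b)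
    (hcont : ContinuousOn f (Icc a b)) (hf : StrictAntiOn f (Icc a b)) (hy : y ∈ Ioo (f b) (f a)) :
    ∃! s, s ∈ Ioo a b ∧ f s = y := by
  obtain ⟨s, hs, rfl⟩ := intermediate_value_Ioo' hab hcont hy
  exact ⟨s, ⟨hs, rfl⟩, fun t ⟨ht, hts⟩ =>
    hf.injOn (Ioo_subset_Icc_self ht) (Ioo_subset_Icc_self hs) hts⟩

/-- Strict convexity of `t ↦ t ^ (n + 2)` on `[0, ∞)`, with the weights `a, b` not normalised. -/
theorem add_mul_pow_div_lt (n : ℕ) {a b x y : ℝ} (ha : 0 < a) (hb : 0 < b) (hx : 0 ≤ x)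
    (hy : 0 ≤ y) (hxy : x ≠ y) :
    (a * x + b * y) ^ (n + 2) / (a + b) ^ (n + 1) < a * x ^ (n + 2) + b * y ^ (n + 2) := by
  have hab : 0 < a + b := add_pos ha hb
  have h := (strictConvexOn_pow (n := n + 2) (by omega)).2 (mem_Ici.2 hx) (mem_Ici.2 hy) hxy
    (div_pos ha hab) (div_pos hb hab) (by field_simp)
  simp only [smul_eq_mul] at h
  rw [div_lt_iff₀ (by positivity)]
  calc (a * x + b * y) ^ (n + 2)
      = (a / (a + b) * x + b / (a + b) * y) ^ (n + 2) * (a + b) ^ (n + 2) := by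
        rw [← mul_pow]; congr 1; field_simp
    _ < (a / (a + b) * x ^ (n + 2) + b / (a + b) * y ^ (n + 2)) * (a + b) ^ (n + 2) := by gcongr
    _ = (a * x ^ (n + 2) + b * y ^ (n + 2)) * (a + b) ^ (n + 1) := by field_simp; ring

theorem mul_add_mul_self_pow_div (n : ℕ) {a b : ℝ} (hab : a + b ≠ 0) (x : ℝ) :
    (a * x + b * x) ^ (n + 2) / (a + b) ^ (n + 1) = (a + b) * x ^ (n + 2) := by
  rw [← add_mul, mul_pow, pow_succ]
  field_simp

theorem strictMonoOn_add_mul_pow_sub_add_mul_pow (n : ℕ) {b c d : ℝ} (hb : 0 < b) (hc : 0 ≤ c)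
    (hcd : c < d) :
    StrictMonoOn (fun s => (d + b * s) ^ (n + 2) - (c + b * s) ^ (n + 2)) (Ici 0) := by
  apply strictMonoOn_of_deriv_pos (convex_Ici 0) (by fun_prop)
  intro s hs
  rw [interior_Ici, mem_Ioi] at hs
  have hderiv : ∀ e : ℝ, HasDerivAt (fun s => (e + b * s) ^ (n + 2))
      ((n + 2 : ℕ) * (e + b * s) ^ (n + 1) * b) s := fun e =>
    (((hasDerivAt_id s).const_mul b).const_add e).pow (n + 2) |>.congr_deriv (by simp)
  rw [((hderiv d).fun_sub (hderiv c)).deriv, ← sub_mul, ← mul_sub]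
  have hpow : (c + b * s) ^ (n + 1) < (d + b * s) ^ (n + 1) := by gcongr
  have := sub_pos.2 hpow
  positivity

/-- Sign and monotonicity properties of G, yielding a unique interior zero s̃. -/
theorem stmt2 (m : ℕ) (a b s₁ s₂ : ℝ) (ha : 0 < a) (hb : 0 < b)
    (h1 : 0 < s₁) (h2 : s₁ < s₂)
    (G : ℝ → ℝ)
    (hG : ∀ s : ℝ, G s = (a * s₁ + b * s) ^ (m + 2) / (a + b) ^ (m + 1) - a * s₁ ^ (m + 2)
        - (a * s₂ + b * s) ^ (m + 2) / (a + b) ^ (m + 1) + a * s₂ ^ (m + 2)) :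
    0 < G s₁ ∧ G s₂ < 0 ∧ StrictAntiOn G (Set.Icc s₁ s₂) ∧
      ∃! s : ℝ, s ∈ Set.Ioo s₁ s₂ ∧ G s = 0 := by
  have hab : a + b ≠ 0 := (add_pos ha hb).ne'
  have hG₁ : 0 < G s₁ := by
    rw [hG, mul_add_mul_self_pow_div m hab]
    linarith [add_mul_pow_div_lt m ha hb (h1.trans h2).le h1.le h2.ne']
  have hG₂ : G s₂ < 0 := by
    rw [hG, mul_add_mul_self_pow_div m hab]
    linarith [add_mul_pow_div_lt m ha hb h1.le (h1.trans h2).le h2.ne]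
  have hanti : StrictAntiOn G (Icc s₁ s₂) := by
    intro s hs t ht hst
    have hdiff := strictMonoOn_add_mul_pow_sub_add_mul_pow m hb (mul_pos ha h1).le
      (mul_lt_mul_of_pos_left h2 ha) (mem_Ici.2 (h1.le.trans hs.1))
      (mem_Ici.2 (h1.le.trans ht.1)) hst
    have := div_lt_div_of_pos_right hdiff (by positivity : (0 : ℝ) < (a + b) ^ (m + 1))
    simp only [sub_div] at this
    rw [hG, hG]
    linarith
  have hcont : Continuous G := by
    rw [funext hG]
    fun_prop
  exact ⟨hG₁, hG₂, hanti,
    hanti.existsUnique_mem_Ioo_eq h2.le hcont.continuousOn ⟨hG₂, hG₁⟩⟩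
end

section
/- Let m ≥ 0 be an integer, a, b, L > 0, s₀ > 0, and let s₁, s₂ ∈ C¹(0,L) satisfy 0 < s₁(t) < s₀ < s₂(t) and (s₁(t)+s₂(t))/2 = s₀ for all t ∈ (0,L). Let s̃(t) ∈ (s₁(t), s₂(t)) be the unique solution of (as₁(t)+b·s̃)^{m+2} − a(a+b)^{m+1}s₁(t)^{m+2} − (as₂(t)+b·s̃)^{m+2} + a(a+b)^{m+1}s₂(t)^{m+2} = 0. Then s̃ ∈ C¹(0,L) and for every t ∈ (0,L), |s̃'(t)| ≤ [1 + (s₂(t)/s₁(t))^m]·|s₁'(t)|. -/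
/-!
Since `s₂ = 2 s₀ - s₁`, the defining equation reads `H (s₁ t) (s̃ t) = 0` with
`H x s = constructionPoly a b m x (2 s₀ - x) s`. As `∂ₛH < 0` for `s ≥ 0`, the root is unique,
so near every point `s̃ = ψ ∘ s₁` for the implicit function `ψ` of `H = 0`; hence
`s̃' = ψ'(s₁) s₁'` with `ψ' = -∂ₓH / ∂ₛH = slopeNum / slopeDen`, which is continuous.
For `x = s₁ < s = s̃ < y = s₂` write `P = (a+b) x ≤ X = a x + b s < Y = a y + b s ≤ Q = (a+b) y`;
the mean value bounds `X^{m+1} - P^{m+1} ≤ (m+1) X^m (X - P)`,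
`Q^{m+1} - Y^{m+1} ≤ (m+1) Q^m (Q - Y)`, `(m+1) X^m (Y - X) ≤ Y^{m+1} - X^{m+1}` and `Q ≤ (y / x) X` give `|ψ'| ≤ 1 + (y / x)^m`.
-/

open Set Filter Topology

theorem pow_succ_sub_pow_succ_le {α : Type*} [CommRing α] [LinearOrder α]
    [IsStrictOrderedRing α] {p x : α} (hp : 0 ≤ p) (hpx : p ≤ x) (n : ℕ) :
    x ^ (n + 1) - p ^ (n + 1) ≤ (n + 1) * x ^ n * (x - p) := by
  have h := abs_pow_sub_pow_le x p (n + 1)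
  rw [abs_of_nonneg (sub_nonneg.2 (pow_le_pow_left₀ hp hpx _)), abs_of_nonneg (sub_nonneg.2 hpx),
    abs_of_nonneg (hp.trans hpx), abs_of_nonneg hp, max_eq_left hpx, Nat.add_sub_cancel] at h
  push_cast at h
  linarith

theorem mul_pow_mul_sub_le_pow_succ_sub_pow_succ {α : Type*} [Field α] [LinearOrder α]
    [IsStrictOrderedRing α] {p x : α} (hp : 0 < p) (hpx : p ≤ x) (n : ℕ) :
    (n + 1) * p ^ n * (x - p) ≤ x ^ (n + 1) - p ^ (n + 1) := by
  have h := one_add_mul_sub_le_pow (a := x / p)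
    (by linarith [div_nonneg (hp.le.trans hpx) hp.le]) (n + 1)
  rw [div_pow, le_div_iff₀ (pow_pos hp _)] at h
  have e : (1 + ((n + 1 : ℕ) : α) * (x / p - 1)) * p ^ (n + 1)
      = p ^ (n + 1) + (n + 1) * p ^ n * (x - p) := by
    field_simp
    push_cast
    ring
  linarith

theorem ContDiffAt.exists_hasDerivAt_implicitFunction {𝕜 : Type*} [RCLike 𝕜]
    {f : 𝕜 × 𝕜 → 𝕜} {u : 𝕜 × 𝕜} {f₁ f₂ : 𝕜}
    (hf : ContDiffAt 𝕜 1 f u) (hf₁ : HasDerivAt (fun x => f (x, u.2)) f₁ u.1)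
    (hf₂ : HasDerivAt (fun y => f (u.1, y)) f₂ u.2) (h₂ : f₂ ≠ 0) :
    ∃ ψ : 𝕜 → 𝕜, ψ u.1 = u.2 ∧ HasDerivAt ψ (-f₁ / f₂) u.1 ∧
      ∀ᶠ x in 𝓝 u.1, f (x, ψ x) = f u := by
  have hD : HasFDerivAt f (fderiv 𝕜 f u) u := (hf.differentiableAt one_ne_zero).hasFDerivAt
  have hD₁ : fderiv 𝕜 f u (1, 0) = f₁ :=
    (hD.comp_hasDerivAt u.1 ((hasDerivAt_id u.1).prodMk (hasDerivAt_const u.1 u.2))).unique hf₁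
  have hD₂ : fderiv 𝕜 f u (0, 1) = f₂ :=
    (hD.comp_hasDerivAt u.2 ((hasDerivAt_const u.2 u.1).prodMk (hasDerivAt_id u.2))).unique hf₂
  have hinr : fderiv 𝕜 f u ∘L .inr 𝕜 𝕜 𝕜 = f₂ • ContinuousLinearMap.id 𝕜 𝕜 := by
    ext; simp [hD₂]
  have hinv : (fderiv 𝕜 f u ∘L .inr 𝕜 𝕜 𝕜).IsInvertible := by
    rw [hinr]
    refine .of_inverse (g := f₂⁻¹ • ContinuousLinearMap.id 𝕜 𝕜) ?_ ?_ <;> ext <;> simp [h₂]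
  refine ⟨hf.implicitFunction one_ne_zero hinv, hf.implicitFunction_apply_self _ _, ?_,
    hf.eventually_apply_implicitFunction _ _⟩
  have hψ := (hf.hasStrictFDerivAt_implicitFunction one_ne_zero hinv).hasFDerivAt.hasDerivAt
  have hslope : (fderiv 𝕜 f u ∘L .inr 𝕜 𝕜 𝕜).inverse (fderiv 𝕜 f u (1, 0)) = f₁ / f₂ := by
    rw [hinv.inverse_apply_eq, hinr, hD₁]
    simp [mul_div_cancel₀ _ h₂]
  simpa [hslope, neg_div] using hψ

theorem contDiffOn_one_of_hasDerivAt {𝕜 F : Type*} [NontriviallyNormedField 𝕜]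
    [NormedAddCommGroup F] [NormedSpace 𝕜 F] {f f' : 𝕜 → F} {s : Set 𝕜} (hs : IsOpen s)
    (hf : ∀ x ∈ s, HasDerivAt f (f' x) x) (hf' : ContinuousOn f' s) : ContDiffOn 𝕜 1 f s := by
  rw [show (1 : WithTop ℕ∞) = 0 + 1 from rfl, contDiffOn_succ_iff_deriv_of_isOpen hs]
  refine ⟨fun x hx => (hf x hx).differentiableAt.differentiableWithinAt, by simp, ?_⟩
  rw [contDiffOn_zero]
  exact hf'.congr fun x hx => (hf x hx).deriv

def constructionPoly (a b : ℝ) (m : ℕ) (x y s : ℝ) : ℝ :=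
  (a * x + b * s) ^ (m + 2) - a * (a + b) ^ (m + 1) * x ^ (m + 2)
    - (a * y + b * s) ^ (m + 2) + a * (a + b) ^ (m + 1) * y ^ (m + 2)

def slopeNum (a b : ℝ) (m : ℕ) (x y s : ℝ) : ℝ :=
  a * (((a * x + b * s) ^ (m + 1) - ((a + b) * x) ^ (m + 1))
    - (((a + b) * y) ^ (m + 1) - (a * y + b * s) ^ (m + 1)))

def slopeDen (a b : ℝ) (m : ℕ) (x y s : ℝ) : ℝ :=
  b * ((a * y + b * s) ^ (m + 1) - (a * x + b * s) ^ (m + 1))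

theorem hasDerivAt_constructionPoly (a b : ℝ) (m : ℕ) (x y s : ℝ) :
    HasDerivAt (constructionPoly a b m x y) (-((m + 2) * slopeDen a b m x y s)) s := by
  have hX := ((hasDerivAt_id s).const_mul b).const_add (a * x) |>.pow (m + 2)
  have hY := ((hasDerivAt_id s).const_mul b).const_add (a * y) |>.pow (m + 2)
  refine (((hX.sub_const (a * (a + b) ^ (m + 1) * x ^ (m + 2))).sub hY).add_const
    (a * (a + b) ^ (m + 1) * y ^ (m + 2))).congr_deriv ?_
  simp only [slopeDen, id]
  push_cast
  ring

theorem hasDerivAt_constructionPoly_sub_self (a b : ℝ) (m : ℕ) (w x s : ℝ) :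
    HasDerivAt (fun x => constructionPoly a b m x (w - x) s)
      ((m + 2) * slopeNum a b m x (w - x) s) x := by
  have hX := ((hasDerivAt_id x).const_mul a).add_const (b * s) |>.pow (m + 2)
  have hY := (((hasDerivAt_id x).const_sub w).const_mul a).add_const (b * s) |>.pow (m + 2)
  have hx := (hasDerivAt_id x).pow (m + 2) |>.const_mul (a * (a + b) ^ (m + 1))
  have hy := ((hasDerivAt_id x).const_sub w).pow (m + 2) |>.const_mul (a * (a + b) ^ (m + 1))
  refine (((hX.sub hx).sub hY).add hy).congr_deriv ?_
  simp only [slopeNum, id, mul_pow]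
  push_cast
  ring

section

variable {a b : ℝ} {m : ℕ}

theorem slopeDen_pos (ha : 0 < a) (hb : 0 < b) {x y s : ℝ} (hX : 0 ≤ a * x + b * s)
    (hxy : x < y) : 0 < slopeDen a b m x y s :=
  mul_pos hb (sub_pos.2 (pow_lt_pow_left₀ (by nlinarith) hX m.succ_ne_zero))

theorem strictAntiOn_constructionPoly (ha : 0 < a) (hb : 0 < b) {x y : ℝ} (hx : 0 ≤ x)
    (hxy : x < y) : StrictAntiOn (constructionPoly a b m x y) (Ici 0) := by
  refine strictAntiOn_of_deriv_neg (convex_Ici 0)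
    (fun s _ => (hasDerivAt_constructionPoly a b m x y s).continuousAt.continuousWithinAt)
    fun s hs => ?_
  rw [interior_Ici] at hs
  rw [(hasDerivAt_constructionPoly a b m x y s).deriv, neg_neg_iff_pos]
  exact mul_pos (by positivity) (slopeDen_pos ha hb (by nlinarith [mem_Ioi.1 hs]) hxy)

theorem abs_slopeNum_le (ha : 0 < a) (hb : 0 < b) {x y s : ℝ} (hx : 0 < x) (hxs : x < s)
    (hsy : s < y) : |slopeNum a b m x y s|
      ≤ (m + 1) * (a * x + b * s) ^ m * a * b * ((s - x) + (y / x) ^ m * (y - s)) := by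
  have hy : 0 < y := by linarith
  have hPX : (a + b) * x ≤ a * x + b * s := by nlinarith
  have hYQ : a * y + b * s ≤ (a + b) * y := by nlinarith
  have hP : 0 ≤ (a + b) * x := by positivity
  have hY : 0 ≤ a * y + b * s := by nlinarith
  have hu := pow_succ_sub_pow_succ_le hP hPX m
  have hv := pow_succ_sub_pow_succ_le hY hYQ m
  have hu₀ := pow_le_pow_left₀ hP hPX (m + 1)
  have hv₀ := pow_le_pow_left₀ hY hYQ (m + 1)
  have hQ : ((a + b) * y) ^ m ≤ (y / x) ^ m * (a * x + b * s) ^ m := by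
    rw [← mul_pow]
    refine pow_le_pow_left₀ (by positivity) ?_ m
    rw [div_mul_eq_mul_div, le_div_iff₀ hx]
    nlinarith [mul_lt_mul_of_pos_left hxs (mul_pos hb hy)]
  calc |slopeNum a b m x y s|
      ≤ a * (((a * x + b * s) ^ (m + 1) - ((a + b) * x) ^ (m + 1))
        + (((a + b) * y) ^ (m + 1) - (a * y + b * s) ^ (m + 1))) := by
        rw [slopeNum, abs_mul, abs_of_pos ha]
        gcongr
        exact abs_sub_le_iff.2 ⟨by linarith, by linarith⟩
    _ ≤ a * ((m + 1) * (a * x + b * s) ^ m * (a * x + b * s - (a + b) * x)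
        + (m + 1) * ((y / x) ^ m * (a * x + b * s) ^ m) * ((a + b) * y - (a * y + b * s))) := by
        gcongr a * ?_
        exact add_le_add hu (hv.trans (by gcongr))
    _ = (m + 1) * (a * x + b * s) ^ m * a * b * ((s - x) + (y / x) ^ m * (y - s)) := by ring

theorem le_slopeDen (ha : 0 ≤ a) (hb : 0 ≤ b) {x y s : ℝ} (hX : 0 < a * x + b * s) (hxy : x ≤ y) :
    (m + 1) * (a * x + b * s) ^ m * a * b * (y - x) ≤ slopeDen a b m x y s := by
  have h := mul_pow_mul_sub_le_pow_succ_sub_pow_succ hX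
    (by nlinarith : a * x + b * s ≤ a * y + b * s) m
  rw [slopeDen]
  nlinarith [mul_le_mul_of_nonneg_left h hb]

theorem abs_slopeNum_div_slopeDen_le (ha : 0 < a) (hb : 0 < b) {x y s : ℝ} (hx : 0 < x)
    (hxs : x < s) (hsy : s < y) :
    |slopeNum a b m x y s / slopeDen a b m x y s| ≤ 1 + (y / x) ^ m := by
  have hX : 0 < a * x + b * s := by nlinarith
  have hden := slopeDen_pos (m := m) ha hb hX.le (hxs.trans hsy)
  have hr : 0 ≤ (y / x) ^ m := by have := hx.trans (hxs.trans hsy); positivity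
  have hC : 0 ≤ (m + 1) * (a * x + b * s) ^ m * a * b := by
    have := pow_nonneg hX.le m; positivity
  rw [abs_div, abs_of_pos hden, div_le_iff₀ hden]
  calc |slopeNum a b m x y s|
      ≤ (m + 1) * (a * x + b * s) ^ m * a * b * ((s - x) + (y / x) ^ m * (y - s)) :=
        abs_slopeNum_le ha hb hx hxs hsy
    _ ≤ (1 + (y / x) ^ m) * ((m + 1) * (a * x + b * s) ^ m * a * b * (y - x)) := by
        nlinarith [mul_nonneg hC (mul_nonneg hr (sub_nonneg.2 hxs.le)),
          mul_nonneg hC (sub_nonneg.2 hsy.le)]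
    _ ≤ (1 + (y / x) ^ m) * slopeDen a b m x y s := by
        gcongr
        exact le_slopeDen ha.le hb.le hX (hxs.trans hsy).le

theorem hasDerivAt_of_eventually_constructionPoly_eq_zero (ha : 0 < a) (hb : 0 < b)
    {s₁ st : ℝ → ℝ} {t₀ d w : ℝ} (hs₁ : HasDerivAt s₁ d t₀)
    (hroot : ∀ᶠ t in 𝓝 t₀, 0 < s₁ t ∧ 2 * s₁ t < w ∧ 0 < st t ∧
      constructionPoly a b m (s₁ t) (w - s₁ t) (st t) = 0) :
    HasDerivAt st (slopeNum a b m (s₁ t₀) (w - s₁ t₀) (st t₀)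
      / slopeDen a b m (s₁ t₀) (w - s₁ t₀) (st t₀) * d) t₀ := by
  obtain ⟨hx₀, hxw₀, hst₀, hroot₀⟩ := hroot.self_of_nhds
  have hH : ContDiffAt ℝ 1 (fun p : ℝ × ℝ => constructionPoly a b m p.1 (w - p.1) p.2)
      (s₁ t₀, st t₀) := by
    unfold constructionPoly; fun_prop
  have hden := slopeDen_pos (m := m) ha hb (by positivity : 0 ≤ a * s₁ t₀ + b * st t₀)
    (by linarith : s₁ t₀ < w - s₁ t₀)
  obtain ⟨ψ, hψ₀, hψ, hψroot⟩ := hH.exists_hasDerivAt_implicitFunction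
    (hasDerivAt_constructionPoly_sub_self a b m w (s₁ t₀) (st t₀))
    (hasDerivAt_constructionPoly a b m (s₁ t₀) (w - s₁ t₀) (st t₀))
    (neg_ne_zero.2 (by positivity))
  dsimp only at hψ₀ hψ hψroot
  rw [neg_div_neg_eq, mul_div_mul_left _ _ (by positivity)] at hψ
  have hψpos : ∀ᶠ t in 𝓝 t₀, 0 < ψ (s₁ t) :=
    continuousAt_const.eventually_lt (hψ.continuousAt.comp hs₁.continuousAt) (by simpa [hψ₀])
  refine (hψ.comp t₀ hs₁).congr_of_eventuallyEq ?_
  filter_upwards [hroot, hs₁.continuousAt.eventually hψroot, hψpos]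
    with t ⟨hx, hxw, hst, hzero⟩ hψt hψt_pos
  exact (strictAntiOn_constructionPoly ha hb hx.le (by linarith)).injOn hst.le hψt_pos.le
    (hzero.trans (hψt.trans hroot₀).symm)

end

theorem stmt5_general (m : ℕ) (a b L s₀ : ℝ) (ha : 0 < a) (hb : 0 < b)
    (s₁ s₂ s₁' : ℝ → ℝ)
    (hs₁d : ∀ t ∈ Set.Ioo (0 : ℝ) L, HasDerivAt s₁ (s₁' t) t)
    (hs₁c : ContinuousOn s₁' (Set.Ioo 0 L))
    (horder : ∀ t ∈ Set.Ioo (0 : ℝ) L, 0 < s₁ t ∧ s₁ t < s₀ ∧ s₀ < s₂ t)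
    (hmid : ∀ t ∈ Set.Ioo (0 : ℝ) L, (s₁ t + s₂ t) / 2 = s₀)
    (st : ℝ → ℝ)
    (hmem : ∀ t ∈ Set.Ioo (0 : ℝ) L, st t ∈ Set.Ioo (s₁ t) (s₂ t))
    (heq : ∀ t ∈ Set.Ioo (0 : ℝ) L,
      (a * s₁ t + b * st t) ^ (m + 2) - a * (a + b) ^ (m + 1) * (s₁ t) ^ (m + 2)
        - (a * s₂ t + b * st t) ^ (m + 2) + a * (a + b) ^ (m + 1) * (s₂ t) ^ (m + 2) = 0) :
    ContDiffOn ℝ 1 st (Set.Ioo 0 L) ∧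
      ∀ t ∈ Set.Ioo (0 : ℝ) L,
        |deriv st t| ≤ (1 + (s₂ t / s₁ t) ^ m) * |s₁' t| := by
  have hs₂ : ∀ t ∈ Ioo 0 L, s₂ t = 2 * s₀ - s₁ t := fun t ht => by linarith [hmid t ht]
  have hderiv : ∀ t ∈ Ioo 0 L, HasDerivAt st (slopeNum a b m (s₁ t) (2 * s₀ - s₁ t) (st t)
      / slopeDen a b m (s₁ t) (2 * s₀ - s₁ t) (st t) * s₁' t) t := by
    intro t ht
    refine hasDerivAt_of_eventually_constructionPoly_eq_zero ha hb (hs₁d t ht) ?_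
    filter_upwards [isOpen_Ioo.mem_nhds ht] with τ hτ
    obtain ⟨hpos, hlt, -⟩ := horder τ hτ
    refine ⟨hpos, by linarith, hpos.trans (hmem τ hτ).1, ?_⟩
    rw [← hs₂ τ hτ]
    exact heq τ hτ
  have hden : ∀ t ∈ Ioo 0 L, 0 < slopeDen a b m (s₁ t) (2 * s₀ - s₁ t) (st t) := fun t ht =>
    slopeDen_pos ha hb (by nlinarith [horder t ht, (hmem t ht).1]) (by linarith [horder t ht])
  refine ⟨contDiffOn_one_of_hasDerivAt isOpen_Ioo hderiv ?_, fun t ht => ?_⟩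
  · have hs₁ : ContinuousOn s₁ (Ioo 0 L) := HasDerivAt.continuousOn hs₁d
    have hst : ContinuousOn st (Ioo 0 L) := HasDerivAt.continuousOn hderiv
    refine ContinuousOn.mul (ContinuousOn.div ?_ ?_ fun t ht => (hden t ht).ne') hs₁c
    · unfold slopeNum; fun_prop
    · unfold slopeDen; fun_prop
  · obtain ⟨hpos, -, -⟩ := horder t ht
    obtain ⟨hlt, hgt⟩ := hmem t ht
    rw [(hderiv t ht).deriv, abs_mul, ← hs₂ t ht]
    gcongr
    exact abs_slopeNum_div_slopeDen_le ha hb hpos hlt hgt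

/-- Construction Lemma, parts (b)–(c): the implicitly defined curve s̃ is C¹ on (0,L)
and its derivative satisfies |s̃'(t)| ≤ [1 + (s₂(t)/s₁(t))^m]·|s₁'(t)|. -/
theorem stmt5 (m : ℕ) (a b L s₀ : ℝ) (ha : 0 < a) (hb : 0 < b) (hL : 0 < L) (hs₀ : 0 < s₀)
    (s₁ s₂ s₁' s₂' : ℝ → ℝ)
    (hs₁d : ∀ t ∈ Set.Ioo (0 : ℝ) L, HasDerivAt s₁ (s₁' t) t)
    (hs₂d : ∀ t ∈ Set.Ioo (0 : ℝ) L, HasDerivAt s₂ (s₂' t) t)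
    (hs₁c : ContinuousOn s₁' (Set.Ioo 0 L))
    (hs₂c : ContinuousOn s₂' (Set.Ioo 0 L))
    (horder : ∀ t ∈ Set.Ioo (0 : ℝ) L, 0 < s₁ t ∧ s₁ t < s₀ ∧ s₀ < s₂ t)
    (hmid : ∀ t ∈ Set.Ioo (0 : ℝ) L, (s₁ t + s₂ t) / 2 = s₀)
    (st : ℝ → ℝ)
    (hmem : ∀ t ∈ Set.Ioo (0 : ℝ) L, st t ∈ Set.Ioo (s₁ t) (s₂ t))
    (heq : ∀ t ∈ Set.Ioo (0 : ℝ) L,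
      (a * s₁ t + b * st t) ^ (m + 2) - a * (a + b) ^ (m + 1) * (s₁ t) ^ (m + 2)
        - (a * s₂ t + b * st t) ^ (m + 2) + a * (a + b) ^ (m + 1) * (s₂ t) ^ (m + 2) = 0) :
    ContDiffOn ℝ 1 st (Set.Ioo 0 L) ∧
      ∀ t ∈ Set.Ioo (0 : ℝ) L,
        |deriv st t| ≤ (1 + (s₂ t / s₁ t) ^ m) * |s₁' t| :=
  stmt5_general m a b L s₀ ha hb s₁ s₂ s₁' hs₁d hs₁c horder hmid st hmem heq
end

section
/- Let m ≥ 0 be an integer, a, b > 0, s₀ > 0, L > 0, and suppose s₁, s₂ ∈ C¹([0,L]) satisfy (s₁(t)+s₂(t))/2 = s₀ for all t, s₁(0) = s₂(0) = s₀ > 0, s₁'(0⁺) = α, and 0 < s₁(t) < s₀ < s₂(t) for t ∈ (0,L). Let s̃(t) ∈ (s₁(t),s₂(t)) solve (as₁(t)+b·s̃)^{m+2} − a(a+b)^{m+1}s₁(t)^{m+2} − (as₂(t)+b·s̃)^{m+2} + a(a+b)^{m+1}s₂(t)^{m+2} = 0 for t ∈ (0,L). Then lim_{t→0⁺} s̃(t)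 = s₀ and lim_{t→0⁺} s̃'(t) = 0. -/
/-!
Put `u = s₀ - s₁`, `w = s̃ - s₀` and `M = (a + b) s₀`. Since `s₂ = s₀ + u` and `|w| ≤ u`, the
defining equation becomes
`(a + b) ((M + bw + au)^(m+2) - (M + bw - au)^(m+2)) = a ((M + (a+b)u)^(m+2) - (M - (a+b)u)^(m+2))`.
For `w = 0` both sides agree up to `O(u³)`, because the central difference
`(M + h)^(m+2) - (M - h)^(m+2)` is linear in `h` up to `O(h³)`; and the left side increases in `w`
at a rate of order `u`. Hence `w = O(u²)`. Differentiating the equation gives `b s̃' D = a s₁' N`,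
where `D` is of order `u` and `N = O(u² + |w|) = O(u²)`, so `|s̃'| ≤ C |s₁'| u → 0`.
-/

open Set Filter Topology

section PowerDifferences

variable {x y h : ℝ}

lemma pow_sub_pow_le_of_le (hy : 0 ≤ y) (hyx : y ≤ x) (n : ℕ) :
    x ^ n - y ^ n ≤ n * x ^ (n - 1) * (x - y) := by
  have := abs_pow_sub_pow_le x y n
  rw [abs_of_nonneg (sub_nonneg.2 hyx), abs_of_nonneg (hy.trans hyx), abs_of_nonneg hy,
    max_eq_left hyx] at this
  linarith [le_abs_self (x ^ n - y ^ n)]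

lemma mul_pow_le_pow_succ_sub_pow_succ (hy : 0 ≤ y) (hyx : y ≤ x) (n : ℕ) :
    (n + 1) * y ^ n * (x - y) ≤ x ^ (n + 1) - y ^ (n + 1) := by
  induction n with
  | zero => simp
  | succ n ih =>
    have hpow : y ^ (n + 1) ≤ x ^ (n + 1) := pow_le_pow_left₀ hy hyx _
    have h₁ := mul_le_mul_of_nonneg_left ih hy
    have h₂ := mul_le_mul_of_nonneg_left hpow (sub_nonneg.2 hyx)
    push_cast
    linear_combination h₁ + h₂

def powCentralDiff (n : ℕ) (x h : ℝ) : ℝ := (x + h) ^ n - (x - h) ^ n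

def powSecondCentralDiff (n : ℕ) (x h : ℝ) : ℝ := (x + h) ^ n + (x - h) ^ n - 2 * x ^ n

lemma mul_pow_le_powCentralDiff (hh : 0 ≤ h) (hhx : h ≤ x) (n : ℕ) :
    2 * (n + 1) * (x - h) ^ n * h ≤ powCentralDiff (n + 1) x h := by
  have := mul_pow_le_pow_succ_sub_pow_succ (sub_nonneg.2 hhx) (by linarith : x - h ≤ x + h) n
  rw [powCentralDiff]
  linarith

lemma abs_powSecondCentralDiff_le (hh : 0 ≤ h) (hhx : h ≤ x) (n : ℕ) :
    |powSecondCentralDiff (n + 1) x h| ≤ 2 * n * (n + 1) * (x + h) ^ (n - 1) * h ^ 2 := by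
  have hx : 0 ≤ x := hh.trans hhx
  have up₁ := pow_sub_pow_le_of_le hx (by linarith : x ≤ x + h) (n + 1)
  have lo₁ := mul_pow_le_pow_succ_sub_pow_succ hx (by linarith : x ≤ x + h) n
  have up₂ := pow_sub_pow_le_of_le (sub_nonneg.2 hhx) (by linarith : x - h ≤ x) (n + 1)
  have lo₂ := mul_pow_le_pow_succ_sub_pow_succ (sub_nonneg.2 hhx) (by linarith : x - h ≤ x) n
  have hgap := pow_sub_pow_le_of_le (sub_nonneg.2 hhx) (by linarith : x - h ≤ x + h) n
  simp only [Nat.add_sub_cancel, Nat.cast_add, Nat.cast_one] at up₁ up₂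
  rw [powSecondCentralDiff, abs_le]
  constructor
  · have : 0 ≤ 2 * n * (n + 1) * (x + h) ^ (n - 1) * h ^ 2 := by positivity
    nlinarith
  · have := mul_le_mul_of_nonneg_left hgap (by positivity : (0 : ℝ) ≤ (n + 1) * h)
    nlinarith

lemma exists_abs_powCentralDiff_sub_le {M : ℝ} (hM : 0 ≤ M) (n : ℕ) :
    ∃ C, ∀ h, 0 ≤ h → h ≤ M →
      |powCentralDiff (n + 1) M h - 2 * (n + 1) * M ^ n * h| ≤ C * h ^ 3 := by
  induction n with
  | zero => exact ⟨0, fun h _ _ => by simp only [powCentralDiff]; ring_nf; simp⟩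
  | succ n ih =>
    obtain ⟨C, hC⟩ := ih
    refine ⟨M * C + 2 * n * (n + 1) * (2 * M) ^ (n - 1), fun h hh hhM => ?_⟩
    have hsplit : powCentralDiff (n + 1 + 1) M h - 2 * ((n + 1 : ℕ) + 1) * M ^ (n + 1) * h =
        M * (powCentralDiff (n + 1) M h - 2 * (n + 1) * M ^ n * h) +
          h * powSecondCentralDiff (n + 1) M h := by
      simp only [powCentralDiff, powSecondCentralDiff]; push_cast; ring
    have hodd := mul_le_mul_of_nonneg_left (hC h hh hhM) hM
    have heven := mul_le_mul_of_nonneg_left (abs_powSecondCentralDiff_le hh hhM n) hh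
    have hpow : (M + h) ^ (n - 1) ≤ (2 * M) ^ (n - 1) :=
      pow_le_pow_left₀ (by linarith) (by linarith) _
    have := mul_le_mul_of_nonneg_left hpow (by positivity : (0 : ℝ) ≤ 2 * n * (n + 1) * h ^ 3)
    rw [hsplit]
    calc _ ≤ M * |powCentralDiff (n + 1) M h - 2 * (n + 1) * M ^ n * h| +
          h * |powSecondCentralDiff (n + 1) M h| := by
          refine (abs_add_le _ _).trans_eq ?_
          rw [abs_mul, abs_mul, abs_of_nonneg hM, abs_of_nonneg hh]
      _ ≤ _ := by nlinarith

lemma mul_sub_le_powCentralDiff_sub (hh : 0 ≤ h) (hhy : h ≤ y) (hyx : y ≤ x) (n : ℕ) :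
    2 * (n + 2) * (n + 1) * (y - h) ^ n * h * (x - y) ≤
      powCentralDiff (n + 2) x h - powCentralDiff (n + 2) y h := by
  induction n with
  | zero => exact le_of_eq (by simp only [powCentralDiff]; push_cast; ring)
  | succ n ih =>
    -- `(z + h)^(k+1) - (z - h)^(k+1) = z ((z + h)^k - (z - h)^k) + h ((z + h)^k + (z - h)^k)`
    have hyh : 0 ≤ y - h := by linarith
    have hK : 0 ≤ 2 * (n + 2) * (n + 1) * (y - h) ^ n * h * (x - y) := by
      have := sub_nonneg.2 hyx; positivity
    have hmono : (y - h) ^ (n + 1) ≤ (y + h) ^ (n + 1) := pow_le_pow_left₀ hyh (by linarith) _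
    have h₁ := mul_le_mul (by linarith : y - h ≤ x) ih hK (by linarith)
    have h₂ := mul_le_mul_of_nonneg_left (mul_pow_le_powCentralDiff hh hhy (n + 1))
      (sub_nonneg.2 hyx)
    have h₃ := mul_le_mul_of_nonneg_left hmono (by positivity : (0 : ℝ) ≤ (n + 2) * (x - y) * h)
    have h₄ := mul_le_mul_of_nonneg_left (mul_pow_le_pow_succ_sub_pow_succ (by linarith : 0 ≤ y + h)
      (by linarith : y + h ≤ x + h) (n + 1)) hh
    have h₅ := mul_le_mul_of_nonneg_left (mul_pow_le_pow_succ_sub_pow_succ hyh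
      (by linarith : y - h ≤ x - h) (n + 1)) hh
    simp only [powCentralDiff] at h₁ h₂ ⊢
    push_cast at h₂ h₃ h₄ h₅ ⊢
    linear_combination h₁ + h₂ + h₃ + h₄ + h₅

lemma mul_abs_sub_le_abs_powCentralDiff_sub {c : ℝ} (hh : 0 ≤ h) (hc : 0 ≤ c)
    (hx : c + h ≤ x) (hy : c + h ≤ y) (n : ℕ) :
    2 * (n + 2) * (n + 1) * c ^ n * h * |x - y| ≤
      |powCentralDiff (n + 2) x h - powCentralDiff (n + 2) y h| := by
  wlog hyx : y ≤ x generalizing x y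
  · rw [abs_sub_comm x, abs_sub_comm (powCentralDiff _ x h)]
    exact this hy hx (le_of_not_ge hyx)
  have hpow : c ^ n ≤ (y - h) ^ n := pow_le_pow_left₀ hc (by linarith) n
  have hconv := mul_sub_le_powCentralDiff_sub hh (by linarith) hyx n
  have : 0 ≤ 2 * (n + 2) * (n + 1) * h * (x - y) := by
    have := sub_nonneg.2 hyx; positivity
  rw [abs_of_nonneg (sub_nonneg.2 hyx), abs_of_nonneg (by nlinarith [pow_nonneg hc n])]
  nlinarith

end PowerDifferences

section NormalizedEquation

variable {a b M : ℝ}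

lemma exists_abs_le_mul_sq_of_powCentralDiff_eq (ha : 0 < a) (hb : 0 < b) (hM : 0 < M) (m : ℕ) :
    ∃ C, ∀ u w : ℝ, 0 < u → (a + b) * u ≤ M / 2 → |w| ≤ u →
      (a + b) * powCentralDiff (m + 2) (M + b * w) (a * u) =
        a * powCentralDiff (m + 2) M ((a + b) * u) →
      |w| ≤ C * u ^ 2 := by
  obtain ⟨C, hC⟩ := exists_abs_powCentralDiff_sub_le hM.le (m + 1)
  set R := a * C * (a + b) ^ 3 + (a + b) * C * a ^ 3
  set K := 2 * (m + 2) * (m + 1) * (M / 2) ^ m * a * b * (a + b)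
  refine ⟨R / K, fun u w hu hsmall hw heq => ?_⟩
  have hab : 0 < a + b := by positivity
  have hsum : a * u + b * u ≤ M / 2 := by linarith [add_mul a b u]
  have hbu : 0 ≤ b * u := by positivity
  have hbw : -(b * u) ≤ b * w := by
    rw [neg_le, ← mul_neg]; exact mul_le_mul_of_nonneg_left (by linarith [neg_abs_le w]) hb.le
  -- the linear parts of the central differences cancel, leaving cubic remainders
  have hcubic : |a * powCentralDiff (m + 2) M ((a + b) * u) -
      (a + b) * powCentralDiff (m + 2) M (a * u)| ≤ R * u ^ 3 := by
    have h₁ := hC ((a + b) * u) (by positivity) (by linarith)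
    have h₂ := hC (a * u) (by positivity) (by linarith)
    push_cast at h₁ h₂
    calc _ = |a * (powCentralDiff (m + 1 + 1) M ((a + b) * u) -
            2 * (m + 1 + 1) * M ^ (m + 1) * ((a + b) * u)) -
          (a + b) * (powCentralDiff (m + 1 + 1) M (a * u) -
            2 * (m + 1 + 1) * M ^ (m + 1) * (a * u))| := by
          ring_nf
      _ ≤ a * (C * ((a + b) * u) ^ 3) + (a + b) * (C * (a * u) ^ 3) := by
          refine (abs_sub _ _).trans ?_
          rw [abs_mul, abs_mul, abs_of_pos ha, abs_of_pos hab]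
          gcongr
      _ = _ := by ring
  have hconvex := mul_abs_sub_le_abs_powCentralDiff_sub (c := M / 2) (x := M + b * w) (y := M)
    (by positivity : 0 ≤ a * u) (by positivity) (by linarith) (by linarith) m
  rw [add_sub_cancel_left, abs_mul, abs_of_pos hb] at hconvex
  rw [← heq, ← mul_sub, abs_mul, abs_of_pos hab] at hcubic
  have key : K * |w| * u ≤ R * u ^ 2 * u :=
    calc K * |w| * u = (a + b) * (2 * (m + 2) * (m + 1) * (M / 2) ^ m * (a * u) * (b * |w|)) := by
          ring
      _ ≤ _ := mul_le_mul_of_nonneg_left hconvex hab.le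
      _ ≤ _ := hcubic
      _ = _ := by ring
  rw [div_mul_eq_mul_div, le_div_iff₀ (by positivity), mul_comm]
  exact le_of_mul_le_mul_right key hu

lemma exists_abs_le_mul_mul_of_powCentralDiff_eq (ha : 0 < a) (hb : 0 < b) (hM : 0 < M)
    (m : ℕ) :
    ∃ C, ∀ u w u' w' : ℝ, 0 < u → (a + b) * u ≤ M / 2 → |w| ≤ u →
      (a + b) * powCentralDiff (m + 2) (M + b * w) (a * u) =
        a * powCentralDiff (m + 2) M ((a + b) * u) →
      b * w' * powCentralDiff (m + 1) (M + b * w) (a * u) +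
        a * u' * ((M + b * w + a * u) ^ (m + 1) + (M + b * w - a * u) ^ (m + 1) -
          (M + (a + b) * u) ^ (m + 1) - (M - (a + b) * u) ^ (m + 1)) = 0 →
      |w'| ≤ C * |u'| * u := by
  obtain ⟨C, hC⟩ := exists_abs_le_mul_sq_of_powCentralDiff_eq ha hb hM m
  set N := 2 * m * (m + 1) * (2 * M) ^ (m - 1) * (a ^ 2 + (a + b) ^ 2) +
    2 * b * (m + 1) * (2 * M) ^ m * C with hN
  set K := 2 * b * (m + 1) * (M / 2) ^ m
  refine ⟨N / K, fun u w u' w' hu hsmall hw heq hderiv => ?_⟩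
  have hK : 0 < K := by positivity
  have hwC := hC u w hu hsmall hw heq
  have hsum : a * u + b * u ≤ M / 2 := by linarith [add_mul a b u]
  obtain ⟨hbw₁, hbw₂⟩ : -(b * u) ≤ b * w ∧ b * w ≤ b * u := by
    rw [← abs_le, abs_mul, abs_of_pos hb]; exact mul_le_mul_of_nonneg_left hw hb.le
  have hau : 0 ≤ a * u := by positivity
  have hs₁ : |powSecondCentralDiff (m + 1) (M + b * w) (a * u)| ≤
      2 * m * (m + 1) * (2 * M) ^ (m - 1) * (a * u) ^ 2 := by
    refine (abs_powSecondCentralDiff_le hau (by linarith) m).trans ?_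
    gcongr
    · linarith
    · linarith
  have hs₂ : |powSecondCentralDiff (m + 1) M ((a + b) * u)| ≤
      2 * m * (m + 1) * (2 * M) ^ (m - 1) * ((a + b) * u) ^ 2 := by
    refine (abs_powSecondCentralDiff_le (by positivity) (by linarith) m).trans ?_
    gcongr
    linarith
  have hshift : |(M + b * w) ^ (m + 1) - M ^ (m + 1)| ≤
      b * (C * u ^ 2) * (m + 1) * (2 * M) ^ m := by
    refine (abs_pow_sub_pow_le (M + b * w) M (m + 1)).trans ?_
    rw [add_sub_cancel_left, abs_mul, abs_of_pos hb, Nat.add_sub_cancel,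
      abs_of_nonneg (by linarith : 0 ≤ M + b * w), abs_of_pos hM]
    push_cast
    have : 0 ≤ C * u ^ 2 := (abs_nonneg w).trans hwC
    gcongr
    exact max_le (by linarith) (by linarith)
  have hnum : |(M + b * w + a * u) ^ (m + 1) + (M + b * w - a * u) ^ (m + 1) -
      (M + (a + b) * u) ^ (m + 1) - (M - (a + b) * u) ^ (m + 1)| ≤ N * u ^ 2 := by
    have hsplit : (M + b * w + a * u) ^ (m + 1) + (M + b * w - a * u) ^ (m + 1) -
        (M + (a + b) * u) ^ (m + 1) - (M - (a + b) * u) ^ (m + 1) =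
        powSecondCentralDiff (m + 1) (M + b * w) (a * u) +
          2 * ((M + b * w) ^ (m + 1) - M ^ (m + 1)) -
          powSecondCentralDiff (m + 1) M ((a + b) * u) := by
      simp only [powSecondCentralDiff]; ring
    have hNu : 2 * m * (m + 1) * (2 * M) ^ (m - 1) * (a * u) ^ 2 +
        2 * (b * (C * u ^ 2) * (m + 1) * (2 * M) ^ m) +
        2 * m * (m + 1) * (2 * M) ^ (m - 1) * ((a + b) * u) ^ 2 = N * u ^ 2 := by
      rw [hN]; ring
    rw [hsplit, abs_le]
    constructor <;> linarith [abs_le.1 hs₁, abs_le.1 hs₂, abs_le.1 hshift]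
  have hden : K * a * u ≤ b * powCentralDiff (m + 1) (M + b * w) (a * u) := by
    have hpow : (M / 2) ^ m ≤ (M + b * w - a * u) ^ m :=
      pow_le_pow_left₀ (by positivity) (by linarith) m
    calc K * a * u = b * (2 * (m + 1) * (M / 2) ^ m * (a * u)) := by ring
      _ ≤ b * (2 * (m + 1) * (M + b * w - a * u) ^ m * (a * u)) := by gcongr
      _ ≤ _ := by gcongr; exact mul_pow_le_powCentralDiff hau (by linarith) m
  have hDpos : 0 ≤ b * powCentralDiff (m + 1) (M + b * w) (a * u) :=
    le_trans (by positivity) hden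
  have key : |w'| * (K * a * u) ≤ (N / K * |u'| * u) * (K * a * u) :=
    calc |w'| * (K * a * u) ≤ |w'| * (b * powCentralDiff (m + 1) (M + b * w) (a * u)) := by
          gcongr
      _ = |b * w' * powCentralDiff (m + 1) (M + b * w) (a * u)| := by
          rw [show b * w' * powCentralDiff (m + 1) (M + b * w) (a * u) =
            w' * (b * powCentralDiff (m + 1) (M + b * w) (a * u)) by ring, abs_mul,
            abs_of_nonneg hDpos]
      _ = a * |u'| * |(M + b * w + a * u) ^ (m + 1) + (M + b * w - a * u) ^ (m + 1) -
            (M + (a + b) * u) ^ (m + 1) - (M - (a + b) * u) ^ (m + 1)| := by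
          rw [eq_neg_of_add_eq_zero_left hderiv, abs_neg, abs_mul, abs_mul, abs_of_pos ha]
      _ ≤ a * |u'| * (N * u ^ 2) := by gcongr
      _ = (N / K * |u'| * u) * (K * a * u) := by field_simp
  exact le_of_mul_le_mul_right key (by positivity)

/-- The defining equation in the variables `u = s₀ - x`, `w = z - s₀`, `M = (a + b) s₀`. -/
lemma powCentralDiff_eq_of_eq {s₀ x y z : ℝ} (m : ℕ) (hxy : x + y = 2 * s₀)
    (h : (a * x + b * z) ^ (m + 2) - a * (a + b) ^ (m + 1) * x ^ (m + 2)
        - (a * y + b * z) ^ (m + 2) + a * (a + b) ^ (m + 1) * y ^ (m + 2) = 0) :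
    (a + b) * powCentralDiff (m + 2) ((a + b) * s₀ + b * (z - s₀)) (a * (s₀ - x)) =
      a * powCentralDiff (m + 2) ((a + b) * s₀) ((a + b) * (s₀ - x)) := by
  obtain rfl : y = 2 * s₀ - x := by linarith
  simp only [powCentralDiff]
  rw [show (a + b) * s₀ + b * (z - s₀) + a * (s₀ - x) = a * (2 * s₀ - x) + b * z by ring,
    show (a + b) * s₀ + b * (z - s₀) - a * (s₀ - x) = a * x + b * z by ring,
    show (a + b) * s₀ + (a + b) * (s₀ - x) = (a + b) * (2 * s₀ - x) by ring,
    show (a + b) * s₀ - (a + b) * (s₀ - x) = (a + b) * x by ring, mul_pow, mul_pow]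
  linear_combination (-(a + b)) * h

lemma HasDerivAt.powCentralDiff {c h : ℝ → ℝ} {c' h' t : ℝ} (hc : HasDerivAt c c' t)
    (hh : HasDerivAt h h' t) (n : ℕ) :
    HasDerivAt (fun s => powCentralDiff (n + 1) (c s) (h s))
      ((n + 1) * ((c t + h t) ^ n * (c' + h') - (c t - h t) ^ n * (c' - h'))) t := by
  unfold _root_.powCentralDiff
  refine (((hc.fun_add hh).fun_pow (n + 1)).fun_sub
    ((hc.fun_sub hh).fun_pow (n + 1))).congr_deriv ?_
  rw [Nat.add_sub_cancel]
  push_cast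
  ring

lemma linearized_eq_zero_of_eventually_powCentralDiff_eq (hab : a + b ≠ 0) (m : ℕ)
    {u w : ℝ → ℝ} {u' w' t : ℝ}
    (hu : HasDerivAt u u' t) (hw : HasDerivAt w w' t)
    (heq : ∀ᶠ s in 𝓝 t, (a + b) * powCentralDiff (m + 2) (M + b * w s) (a * u s) =
      a * powCentralDiff (m + 2) M ((a + b) * u s)) :
    b * w' * powCentralDiff (m + 1) (M + b * w t) (a * u t) +
      a * u' * ((M + b * w t + a * u t) ^ (m + 1) + (M + b * w t - a * u t) ^ (m + 1) -
        (M + (a + b) * u t) ^ (m + 1) - (M - (a + b) * u t) ^ (m + 1)) = 0 := by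
  have hL := (((hw.const_mul b).const_add M).powCentralDiff
    (hu.const_mul a) (m + 1)).const_mul (a + b)
  have hR := ((hasDerivAt_const t M).powCentralDiff (hu.const_mul (a + b)) (m + 1)).const_mul a
  have hderiv := hL.unique (hR.congr_of_eventuallyEq heq)
  have : (a + b) * ((m + 2) * (b * w' * powCentralDiff (m + 1) (M + b * w t) (a * u t) +
      a * u' * ((M + b * w t + a * u t) ^ (m + 1) + (M + b * w t - a * u t) ^ (m + 1) -
        (M + (a + b) * u t) ^ (m + 1) - (M - (a + b) * u t) ^ (m + 1)))) = 0 := by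
    simp only [powCentralDiff] at hderiv ⊢
    push_cast at hderiv
    linear_combination hderiv
  simpa [hab, (by positivity : (m : ℝ) + 2 ≠ 0)] using this

lemma exists_abs_le_mul_mul_of_hasDerivAt (ha : 0 < a) (hb : 0 < b) (hM : 0 < M) (m : ℕ) :
    ∃ C, ∀ {u w : ℝ → ℝ} {u' w' t : ℝ}, HasDerivAt u u' t → HasDerivAt w w' t →
      (∀ᶠ s in 𝓝 t, (a + b) * powCentralDiff (m + 2) (M + b * w s) (a * u s) =
        a * powCentralDiff (m + 2) M ((a + b) * u s)) →
      0 < u t → (a + b) * u t ≤ M / 2 → |w t| ≤ u t → |w'| ≤ C * |u'| * u t := by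
  obtain ⟨C, hC⟩ := exists_abs_le_mul_mul_of_powCentralDiff_eq ha hb hM m
  exact ⟨C, fun hu hw heq hu₀ hsmall hwu => hC _ _ _ _ hu₀ hsmall hwu heq.self_of_nhds
    (linearized_eq_zero_of_eventually_powCentralDiff_eq (add_pos ha hb).ne' m hu hw heq)⟩

end NormalizedEquation

lemma ContDiffOn.exists_abs_deriv_le {f : ℝ → ℝ} {a b : ℝ} (hf : ContDiffOn ℝ 1 f (Icc a b))
    (hab : a < b) : ∃ B, ∀ t ∈ Ioo a b, |deriv f t| ≤ B := by
  obtain ⟨B, hB⟩ := isCompact_Icc.exists_bound_of_continuousOn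
    (hf.continuousOn_derivWithin (uniqueDiffOn_Icc hab) le_rfl)
  refine ⟨B, fun t ht => ?_⟩
  rw [← derivWithin_of_mem_nhds (Icc_mem_nhds ht.1 ht.2)]
  exact hB t (Ioo_subset_Icc_self ht)

theorem stmt6_general (m : ℕ) (a b s₀ L : ℝ) (ha : 0 < a) (hb : 0 < b) (hs₀ : 0 < s₀) (hL : 0 < L)
    (s₁ s₂ : ℝ → ℝ)
    (hs₁C1 : ContDiffOn ℝ 1 s₁ (Set.Icc 0 L))
    (hmid : ∀ t ∈ Set.Icc (0 : ℝ) L, (s₁ t + s₂ t) / 2 = s₀)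
    (h10 : s₁ 0 = s₀)
    (horder : ∀ t ∈ Set.Ioo (0 : ℝ) L, 0 < s₁ t ∧ s₁ t < s₀ ∧ s₀ < s₂ t)
    (st : ℝ → ℝ)
    (hmem : ∀ t ∈ Set.Ioo (0 : ℝ) L, st t ∈ Set.Ioo (s₁ t) (s₂ t))
    (heq : ∀ t ∈ Set.Ioo (0 : ℝ) L,
      (a * s₁ t + b * st t) ^ (m + 2) - a * (a + b) ^ (m + 1) * (s₁ t) ^ (m + 2)
        - (a * s₂ t + b * st t) ^ (m + 2) + a * (a + b) ^ (m + 1) * (s₂ t) ^ (m + 2) = 0)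
    (hdiff : ∀ t ∈ Set.Ioo (0 : ℝ) L, DifferentiableAt ℝ st t) :
    Tendsto st (𝓝[>] 0) (𝓝 s₀) ∧ Tendsto (deriv st) (𝓝[>] 0) (𝓝 0) := by
  have hM : 0 < (a + b) * s₀ := by positivity
  have hsum : ∀ t ∈ Ioo 0 L, s₁ t + s₂ t = 2 * s₀ := fun t ht => by
    linarith [hmid t (Ioo_subset_Icc_self ht)]
  have hwu : ∀ t ∈ Ioo 0 L, |st t - s₀| ≤ s₀ - s₁ t := fun t ht => by
    obtain ⟨h₁, h₂⟩ := hmem t ht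
    rw [abs_le]; constructor <;> linarith [hsum t ht]
  have hu : Tendsto (fun t => s₀ - s₁ t) (𝓝[>] 0) (𝓝 0) := by
    have := (hs₁C1.continuousOn.continuousWithinAt (left_mem_Icc.2 hL.le)).mono_of_mem_nhdsWithin
      (Icc_mem_nhdsGT hL)
    simpa [h10] using this.tendsto.const_sub s₀
  have hIoo : ∀ᶠ t in 𝓝[>] 0, t ∈ Ioo 0 L := Ioo_mem_nhdsGT hL
  refine ⟨tendsto_sub_nhds_zero_iff.1 (squeeze_zero_norm' (hIoo.mono hwu) hu), ?_⟩
  obtain ⟨B, hB⟩ := hs₁C1.exists_abs_deriv_le hL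
  obtain ⟨C, hC⟩ := exists_abs_le_mul_mul_of_hasDerivAt ha hb hM m
  have hsmall : ∀ᶠ t in 𝓝[>] 0, (a + b) * (s₀ - s₁ t) ≤ (a + b) * s₀ / 2 := by
    simpa using (hu.const_mul (a + b)).eventually (ge_mem_nhds (by simpa using half_pos hM))
  refine squeeze_zero_norm' ?_ (by simpa using hu.const_mul (|C| * B))
  filter_upwards [hIoo, hsmall] with t ht hts
  have hd₁ := (hs₁C1.differentiableOn one_ne_zero).differentiableAt (Icc_mem_nhds ht.1 ht.2)
  have hbound := hC (hd₁.hasDerivAt.const_sub s₀) ((hdiff t ht).hasDerivAt.sub_const s₀)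
    (eventually_of_mem (Ioo_mem_nhds ht.1 ht.2) fun s hs =>
      powCentralDiff_eq_of_eq m (hsum s hs) (heq s hs))
    (by linarith [(horder t ht).2.1]) hts (hwu t ht)
  rw [Real.norm_eq_abs]
  calc |deriv st t| ≤ C * |deriv s₁ t| * (s₀ - s₁ t) := by rwa [abs_neg] at hbound
    _ ≤ |C| * B * (s₀ - s₁ t) := by
      have := hwu t ht
      gcongr
      · exact (abs_nonneg _).trans this
      · exact le_abs_self C
      · exact hB t ht

/-- Construction Lemma, part (d), boundary case: when s₁ and s₂ both start at s₀ at t = 0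
with slopes ±α, the implicit curve s̃ tends to s₀ and its derivative tends to 0 as t → 0⁺. -/
theorem stmt6 (m : ℕ) (a b s₀ L α : ℝ) (ha : 0 < a) (hb : 0 < b) (hs₀ : 0 < s₀) (hL : 0 < L)
    (s₁ s₂ : ℝ → ℝ)
    (hs₁C1 : ContDiffOn ℝ 1 s₁ (Set.Icc 0 L))
    (hs₂C1 : ContDiffOn ℝ 1 s₂ (Set.Icc 0 L))
    (hmid : ∀ t ∈ Set.Icc (0 : ℝ) L, (s₁ t + s₂ t) / 2 = s₀)
    (h10 : s₁ 0 = s₀) (h20 : s₂ 0 = s₀)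
    (hslope : HasDerivWithinAt s₁ α (Set.Ici 0) 0)
    (horder : ∀ t ∈ Set.Ioo (0 : ℝ) L, 0 < s₁ t ∧ s₁ t < s₀ ∧ s₀ < s₂ t)
    (st : ℝ → ℝ)
    (hmem : ∀ t ∈ Set.Ioo (0 : ℝ) L, st t ∈ Set.Ioo (s₁ t) (s₂ t))
    (heq : ∀ t ∈ Set.Ioo (0 : ℝ) L,
      (a * s₁ t + b * st t) ^ (m + 2) - a * (a + b) ^ (m + 1) * (s₁ t) ^ (m + 2)
        - (a * s₂ t + b * st t) ^ (m + 2) + a * (a + b) ^ (m + 1) * (s₂ t) ^ (m + 2) = 0)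
    (hdiff : ∀ t ∈ Set.Ioo (0 : ℝ) L, DifferentiableAt ℝ st t) :
    Tendsto st (𝓝[>] 0) (𝓝 s₀) ∧ Tendsto (deriv st) (𝓝[>] 0) (𝓝 0) :=
  stmt6_general m a b s₀ L ha hb hs₀ hL s₁ s₂ hs₁C1 hmid h10 horder st hmem heq hdiff
end
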